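/- Let τ ∈ ∂_e T_β(A) be an extremal (α^D, β)-conformal trace on A (for the crossed product setting with countable discrete group G). Then the induced action γ̄_g = Ad W_g of G on the center of the von Neumann algebra π_τ(A)'' is ergodic: any central element of π_τ(A)'' fixed by all γ̄_g is a scalar. -/

import Mathlib

/-!
Write `z = Re z + i Im z` and rescale: it suffices to show that `P = 1/2 + ξ` is scalar for
`ξ` self-adjoint of norm `< 1/2` in the `γ̄`-fixed centre of `π_τ(A)''`, so that `0 ≤ P ≤ 1`.
The functionals `τ_P(a) = ⟪Ω, P π(a) Ω⟫` and `τ_{1-P}` add up to `τ` and are positive,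
conformal (since `P` commutes with `π(A)` and the `W_g`, and `W_g^* Ω = π(e^{β D_g / 2}) Ω`) and
tracial (since `P` commutes with the right multiplications `π(c) Ω ↦ π(c b) Ω`, which lie in
`π(A)'`). Extremality gives `τ_P = λ τ = τ_{λ 1}`, and `T ↦ τ_T` is injective on `π(A)'` because
`Ω` is cyclic, so `P = λ 1`.
-/

/-- The commutant of a set of bounded operators. -/
def opCommutant {H : Type*} [NormedAddCommGroup H] [InnerProductSpace ℂ H]
    (S : Set (H →L[ℂ] H)) : Set (H →L[ℂ] H) :=
  {x | ∀ y ∈ S, x * y = y * x}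

/-- The set `T_β(A)` of `(α^D,β)`-conformal tracial states in the crossed product
setting: tracial states `τ` with `τ (γ_g a) = τ (a e^{β D_g})`. -/
def IsConformalTrace {A : Type*} [NormedRing A] [StarRing A] [CStarRing A]
    [NormedAlgebra ℂ A] [CompleteSpace A] [StarModule ℂ A]
    {G : Type*} [Group G] (γ : G → (A ≃⋆ₐ[ℂ] A)) (D : G → A) (β : ℝ)
    (τ : A →L[ℂ] ℂ) : Prop :=
  τ 1 = 1 ∧ (∀ x : A, 0 ≤ (τ (star x * x)).re ∧ (τ (star x * x)).im = 0) ∧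
  (∀ x y : A, τ (x * y) = τ (y * x)) ∧
  (∀ (a : A) (g : G), τ (γ g a) = τ (a * NormedSpace.exp ((β : ℂ) • D g)))

open scoped CStarAlgebra ComplexOrder InnerProductSpace

section Conformal

variable {A : Type*} [CStarAlgebra A] {G : Type*}
  (γ : G → (A ≃⋆ₐ[ℂ] A)) (D : G → A) (β : ℝ)

/-- The cone over `T_β(A)`. -/
def IsConformalFunctional (φ : A →L[ℂ] ℂ) : Prop :=
  (∀ x : A, 0 ≤ φ (star x * x)) ∧ (∀ x y : A, φ (x * y) = φ (y * x)) ∧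
  ∀ (a : A) (g : G), φ (γ g a) = φ (a * NormedSpace.exp ((β : ℂ) • D g))

variable {γ D β} in
theorem IsConformalFunctional.smul {φ : A →L[ℂ] ℂ} (hφ : IsConformalFunctional γ D β φ)
    {c : ℂ} (hc : 0 ≤ c) : IsConformalFunctional γ D β (c • φ) := by
  obtain ⟨hpos, htr, hconf⟩ := hφ
  refine ⟨fun x => ?_, fun x y => ?_, fun a g => ?_⟩ <;>
    simp only [FunLike.coe_smul, Pi.smul_apply, smul_eq_mul]
  · exact mul_nonneg hc (hpos x)
  · rw [htr]
  · rw [hconf]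

variable {γ D β} in
theorem IsConformalFunctional.apply_one_eq_re {φ : A →L[ℂ] ℂ}
    (hφ : IsConformalFunctional γ D β φ) : φ 1 = (φ 1).re :=
  Complex.eq_re_of_ofReal_le (r := 0) (by simpa using hφ.1 1)

variable [Group G]

def IsExtremeConformalTrace (τ : A →L[ℂ] ℂ) : Prop :=
  ∀ τ₁ τ₂ : A →L[ℂ] ℂ, IsConformalTrace γ D β τ₁ → IsConformalTrace γ D β τ₂ →
    ∀ t : ℝ, 0 < t → t < 1 → τ = (t : ℂ) • τ₁ + ((1 - t : ℝ) : ℂ) • τ₂ → τ₁ = τ ∧ τ₂ = τ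

variable {γ D β}

theorem isConformalTrace_iff {τ : A →L[ℂ] ℂ} :
    IsConformalTrace γ D β τ ↔ τ 1 = 1 ∧ IsConformalFunctional γ D β τ := by
  simp only [IsConformalTrace, IsConformalFunctional, Complex.nonneg_iff, eq_comm (a := (0 : ℝ))]

theorem IsExtremeConformalTrace.eq_smul_of_add_eq {τ φ ψ : A →L[ℂ] ℂ}
    (hext : IsExtremeConformalTrace γ D β τ) (hτ : τ 1 = 1)
    (hφ : IsConformalFunctional γ D β φ) (hψ : IsConformalFunctional γ D β ψ)
    (hsum : φ + ψ = τ) (hφ0 : φ 1 ≠ 0) (hψ0 : ψ 1 ≠ 0) : φ = φ 1 • τ := by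
  set t := (φ 1).re
  have ht : φ 1 = t := hφ.apply_one_eq_re
  have hψt : ψ 1 = ((1 - t : ℝ) : ℂ) := by
    rw [Complex.ofReal_sub, Complex.ofReal_one, ← hτ, ← hsum, ← ht]
    simp
  have ht0 : 0 < t := by
    have : (0 : ℂ) < φ 1 := lt_of_le_of_ne (by simpa using hφ.1 1) hφ0.symm
    rwa [ht, Complex.zero_lt_real] at this
  have ht1 : 0 < 1 - t := by
    have : (0 : ℂ) < ψ 1 := lt_of_le_of_ne (by simpa using hψ.1 1) hψ0.symm
    rwa [hψt, Complex.zero_lt_real] at this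
  have hnorm : ∀ {c : ℂ} {χ : A →L[ℂ] ℂ}, IsConformalFunctional γ D β χ → χ 1 = c → 0 < c →
      IsConformalTrace γ D β (c⁻¹ • χ) := fun hχ h1 hc =>
    isConformalTrace_iff.2 ⟨by simp [h1, hc.ne'], hχ.smul (inv_nonneg.2 hc.le)⟩
  have hdecomp : τ = (t : ℂ) • ((t : ℂ)⁻¹ • φ) + ((1 - t : ℝ) : ℂ) • (((1 - t : ℝ) : ℂ)⁻¹ • ψ) := by
    rw [smul_inv_smul₀ (by exact_mod_cast ht0.ne'), smul_inv_smul₀ (by exact_mod_cast ht1.ne'),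
      hsum]
  have h := (hext _ _ (hnorm hφ ht (by exact_mod_cast ht0))
    (hnorm hψ hψt (by exact_mod_cast ht1)) t ht0 (by linarith) hdecomp).1
  rw [ht, ← h, smul_inv_smul₀ (by exact_mod_cast ht0.ne')]

end Conformal

theorem Commute.apply_eq {R M : Type*} [Semiring R] [TopologicalSpace M] [AddCommMonoid M]
    [Module R M] {S T : M →L[R] M} (h : Commute S T) (v : M) : S (T v) = T (S v) :=
  DFunLike.congr_fun h.eq v

section GNS

variable {A : Type*} [CStarAlgebra A]
  {H : Type*} [NormedAddCommGroup H] [InnerProductSpace ℂ H] [CompleteSpace H]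
  (π : A →⋆ₐ[ℂ] (H →L[ℂ] H)) (Ω : H)

noncomputable def orbitMap : A →L[ℂ] H :=
  (ContinuousLinearMap.apply ℂ H Ω).comp ⟨π.toLinearMap, map_continuous π⟩

@[simp]
theorem orbitMap_apply (a : A) : orbitMap π Ω a = π a Ω := rfl

noncomputable def vectorFunctional (T : H →L[ℂ] H) : A →L[ℂ] ℂ :=
  (innerSL ℂ Ω).comp (T.comp (orbitMap π Ω))

@[simp]
theorem vectorFunctional_apply (T : H →L[ℂ] H) (a : A) :
    vectorFunctional π Ω T a = ⟪Ω, T (π a Ω)⟫_ℂ := rfl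

theorem map_mul_apply (a b : A) (v : H) : π (a * b) v = π a (π b v) := by
  rw [map_mul]; rfl

theorem inner_map_apply_left (a : A) (v w : H) : ⟪π a v, w⟫_ℂ = ⟪v, π (star a) w⟫_ℂ := by
  rw [map_star, ContinuousLinearMap.star_eq_adjoint, ContinuousLinearMap.adjoint_inner_right]

variable {π Ω}

theorem vectorFunctional_star_mul {T : H →L[ℂ] H} (hT : ∀ a, Commute T (π a)) (b c : A) :
    vectorFunctional π Ω T (star b * c) = ⟪π b Ω, T (π c Ω)⟫_ℂ := by
  rw [inner_map_apply_left, ← (hT (star b)).apply_eq, vectorFunctional_apply, map_mul_apply]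

section Cyclic

variable (hcyc : (Submodule.span ℂ (Set.range fun a : A => π a Ω)).topologicalClosure = ⊤)
include hcyc

theorem denseRange_orbitMap : DenseRange (orbitMap π Ω) := by
  have hspan : Submodule.span ℂ (Set.range fun a : A => π a Ω) =
      LinearMap.range (orbitMap π Ω).toLinearMap := by
    rw [← Submodule.span_eq (LinearMap.range _), LinearMap.coe_range]; rfl
  rw [hspan, ← Submodule.dense_iff_topologicalClosure_eq_top, LinearMap.coe_range] at hcyc
  exact hcyc

theorem ext_orbit {F : Type*} [NormedAddCommGroup F] [NormedSpace ℂ F] {S T : H →L[ℂ] F}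
    (h : ∀ a, S (π a Ω) = T (π a Ω)) : S = T :=
  DFunLike.coe_injective <|
    (denseRange_orbitMap hcyc).equalizer S.continuous T.continuous (funext h)

theorem ext_inner_orbit {v w : H} (h : ∀ a, ⟪π a Ω, v⟫_ℂ = ⟪π a Ω, w⟫_ℂ) : v = w := by
  refine ext_inner_right ℂ fun u => ?_
  have := ext_orbit hcyc (S := innerSL ℂ v) (T := innerSL ℂ w) fun a => by
    simp only [innerSL_apply_apply, ← inner_conj_symm v, ← inner_conj_symm w, h]
  exact DFunLike.congr_fun this u

theorem eq_of_vectorFunctional_eq {S T : H →L[ℂ] H} (hS : ∀ a, Commute S (π a))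
    (hT : ∀ a, Commute T (π a)) (h : vectorFunctional π Ω S = vectorFunctional π Ω T) : S = T :=
  ext_orbit hcyc fun c => ext_inner_orbit hcyc fun b => by
    rw [← vectorFunctional_star_mul hS, ← vectorFunctional_star_mul hT, h]

end Cyclic

theorem vectorFunctional_star_mul_self_nonneg {T : H →L[ℂ] H} (hT : 0 ≤ T)
    (hTπ : ∀ a, Commute T (π a)) (x : A) : 0 ≤ vectorFunctional π Ω T (star x * x) := by
  rw [vectorFunctional_star_mul hTπ]
  exact ((ContinuousLinearMap.nonneg_iff_isPositive T).1 hT).inner_nonneg_right _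

variable (π Ω) in
/-- Right multiplication `π(c) Ω ↦ π(c b) Ω`, which is well defined and bounded only when the
vector state of `Ω` is tracial (`rightMul_apply`). -/
noncomputable def rightMul (b : A) : H →L[ℂ] H :=
  ((orbitMap π Ω).toLinearMap ∘ₗ LinearMap.mulRight ℂ b).extendOfNorm (orbitMap π Ω).toLinearMap

section Tracial

variable (htr : ∀ a b : A, ⟪Ω, π (a * b) Ω⟫_ℂ = ⟪Ω, π (b * a) Ω⟫_ℂ)
include htr

theorem norm_orbit_star (a : A) : ‖π (star a) Ω‖ = ‖π a Ω‖ := by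
  have h : ⟪π (star a) Ω, π (star a) Ω⟫_ℂ = ⟪π a Ω, π a Ω⟫_ℂ := by
    rw [inner_map_apply_left, star_star, ← map_mul_apply, htr, map_mul_apply,
      ← inner_map_apply_left]
  simp only [inner_self_eq_norm_sq_to_K] at h
  exact (sq_eq_sq₀ (norm_nonneg _) (norm_nonneg _)).1 (by exact_mod_cast h)

theorem norm_orbit_mul_le (b c : A) : ‖π (c * b) Ω‖ ≤ ‖b‖ * ‖π c Ω‖ :=
  calc ‖π (c * b) Ω‖ = ‖π (star b) (π (star c) Ω)‖ := by
        rw [← norm_orbit_star htr, star_mul, map_mul_apply]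
    _ ≤ ‖π (star b)‖ * ‖π (star c) Ω‖ := (π (star b)).le_opNorm _
    _ ≤ ‖b‖ * ‖π c Ω‖ := by
        rw [norm_orbit_star htr]
        gcongr
        simpa using NonUnitalStarAlgHom.norm_apply_le π (star b)

variable (hcyc : (Submodule.span ℂ (Set.range fun a : A => π a Ω)).topologicalClosure = ⊤)
include hcyc

theorem rightMul_apply (b c : A) : rightMul π Ω b (π c Ω) = π (c * b) Ω :=
  LinearMap.extendOfNorm_eq (denseRange_orbitMap hcyc) ⟨‖b‖, norm_orbit_mul_le htr b⟩ c

theorem rightMul_mem_opCommutant (b : A) : rightMul π Ω b ∈ opCommutant (Set.range π) := by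
  rintro _ ⟨a, rfl⟩
  refine ext_orbit hcyc fun c => ?_
  change rightMul π Ω b (π a (π c Ω)) = π a (rightMul π Ω b (π c Ω))
  rw [← map_mul_apply, rightMul_apply htr hcyc, rightMul_apply htr hcyc, ← map_mul_apply,
    mul_assoc]

theorem inner_rightMul (b : A) (v : H) : ⟪Ω, rightMul π Ω b v⟫_ℂ = ⟪π (star b) Ω, v⟫_ℂ := by
  have h : (innerSL ℂ Ω).comp (rightMul π Ω b) = innerSL ℂ (π (star b) Ω) :=
    ext_orbit hcyc fun c => by
      rw [ContinuousLinearMap.comp_apply, innerSL_apply_apply, innerSL_apply_apply,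
        rightMul_apply htr hcyc, htr, inner_map_apply_left, star_star, map_mul_apply]
  exact DFunLike.congr_fun h v

theorem vectorFunctional_mul_comm {T : H →L[ℂ] H} (hTπ : ∀ a, Commute T (π a))
    (hT' : ∀ S ∈ opCommutant (Set.range π), Commute T S) (a b : A) :
    vectorFunctional π Ω T (a * b) = vectorFunctional π Ω T (b * a) := by
  rw [vectorFunctional_apply, ← rightMul_apply htr hcyc,
    (hT' _ (rightMul_mem_opCommutant htr hcyc b)).apply_eq, inner_rightMul htr hcyc,
    ← vectorFunctional_star_mul hTπ, star_star]

end Tracial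

end GNS

theorem StarAlgEquiv.map_exp {A B : Type*} [CStarAlgebra A] [CStarAlgebra B] (e : A ≃⋆ₐ[ℂ] B)
    (x : A) : e (NormedSpace.exp x) = NormedSpace.exp (e x) := by
  let : NormedAlgebra ℚ A := NormedAlgebra.restrictScalars ℚ ℂ A
  let : NormedAlgebra ℚ B := NormedAlgebra.restrictScalars ℚ ℂ B
  exact NormedSpace.map_exp e (StarAlgEquiv.isometry e).continuous x

theorem exp_smul_mul_exp_smul {A : Type*} [CStarAlgebra A] (d : A) (r s : ℂ) :
    NormedSpace.exp (r • d) * NormedSpace.exp (s • d) = NormedSpace.exp ((r + s) • d) := by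
  let : NormedAlgebra ℚ A := NormedAlgebra.restrictScalars ℚ ℂ A
  rw [add_smul, NormedSpace.exp_add_of_commute (((Commute.refl d).smul_left r).smul_right s)]

section Cocycle

variable {A : Type*} [CStarAlgebra A] {G : Type*} [Group G] {γ : G → (A ≃⋆ₐ[ℂ] A)} {D : G → A}
  (hD : ∀ g h : G, γ h⁻¹ (D g) + D h = D (g * h))
include hD

theorem cocycle_one : D 1 = 0 := by
  have h := hD 1 1
  rw [mul_one, add_eq_right] at h
  exact (map_eq_zero_iff (γ 1⁻¹) (γ 1⁻¹).injective).1 h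

theorem map_cocycle_self (g : G) : γ g (D g) = -D g⁻¹ := by
  have h := hD g g⁻¹
  rw [inv_inv, mul_inv_cancel, cocycle_one hD] at h
  exact eq_neg_of_add_eq_zero_left h

theorem map_exp_cocycle_mul_exp_cocycle_inv (g : G) (r : ℂ) :
    γ g (NormedSpace.exp (r • D g)) * NormedSpace.exp (r • D g⁻¹) = 1 := by
  rw [StarAlgEquiv.map_exp, map_smul, map_cocycle_self hD, smul_neg, ← neg_smul,
    exp_smul_mul_exp_smul, neg_add_cancel, zero_smul, NormedSpace.exp_zero]

end Cocycle

section Covariant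

variable {A : Type*} [CStarAlgebra A] {G : Type*} [Group G] {γ : G → (A ≃⋆ₐ[ℂ] A)} {D : G → A}
  {β : ℝ} {H : Type*} [NormedAddCommGroup H] [InnerProductSpace ℂ H] [CompleteSpace H]
  {π : A →⋆ₐ[ℂ] (H →L[ℂ] H)} {Ω : H} {W : G → (H →L[ℂ] H)}

theorem star_apply_cyclic_eq (hD : ∀ g h : G, γ h⁻¹ (D g) + D h = D (g * h)) {g : G}
    (hW : star (W g) * W g = 1)
    (hWΩ : ∀ a : A, W g (π a Ω) = π (γ g a * NormedSpace.exp (((β / 2 : ℝ) : ℂ) • D g⁻¹)) Ω) :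
    star (W g) Ω = π (NormedSpace.exp (((β / 2 : ℝ) : ℂ) • D g)) Ω := by
  have h : W g (π (NormedSpace.exp (((β / 2 : ℝ) : ℂ) • D g)) Ω) = Ω := by
    rw [hWΩ, map_exp_cocycle_mul_exp_cocycle_inv hD, map_one]
    rfl
  conv_lhs => rw [← h]
  exact DFunLike.congr_fun hW _

theorem vectorFunctional_map (hDsa : ∀ g, star (D g) = D g)
    (hDcentral : ∀ g, ∀ x : A, D g * x = x * D g)
    (hD : ∀ g h : G, γ h⁻¹ (D g) + D h = D (g * h)) {g : G}
    (hW : star (W g) * W g = 1) (hWcov : ∀ a : A, W g * π a * star (W g) = π (γ g a))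
    (hWΩ : ∀ a : A, W g (π a Ω) = π (γ g a * NormedSpace.exp (((β / 2 : ℝ) : ℂ) • D g⁻¹)) Ω)
    {T : H →L[ℂ] H} (hTπ : ∀ a, Commute T (π a)) (hTW : Commute T (W g)) (a : A) :
    vectorFunctional π Ω T (γ g a) =
      vectorFunctional π Ω T (a * NormedSpace.exp ((β : ℂ) • D g)) := by
  set x := NormedSpace.exp (((β / 2 : ℝ) : ℂ) • D g)
  have hx : star x * (a * x) = a * NormedSpace.exp ((β : ℂ) • D g) := by
    have hsa : star x = x := by
      rw [NormedSpace.star_exp, star_smul, hDsa, Complex.star_def, Complex.conj_ofReal]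
    have hcomm : Commute x a := ((Commute.smul_left (hDcentral g a) _)).exp_left
    rw [hsa, ← mul_assoc, hcomm.eq, mul_assoc, exp_smul_mul_exp_smul, ← Complex.ofReal_add,
      add_halves]
  calc vectorFunctional π Ω T (γ g a) = ⟪Ω, T (W g (π a (star (W g) Ω)))⟫_ℂ := by
        rw [vectorFunctional_apply, ← hWcov]; rfl
    _ = ⟪π x Ω, T (π (a * x) Ω)⟫_ℂ := by
        rw [hTW.apply_eq, ← ContinuousLinearMap.adjoint_inner_left,
          ← ContinuousLinearMap.star_eq_adjoint, star_apply_cyclic_eq hD hW hWΩ, map_mul_apply]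
    _ = vectorFunctional π Ω T (a * NormedSpace.exp ((β : ℂ) • D g)) := by
        rw [← vectorFunctional_star_mul hTπ, hx]

end Covariant

theorem IsSelfAdjoint.algebraMap_add_nonneg {B : Type*} [CStarAlgebra B] [PartialOrder B]
    [StarOrderedRing B] {a : B} (ha : IsSelfAdjoint a) {s : ℝ} (hs : ‖a‖ ≤ s) :
    0 ≤ algebraMap ℝ B s + a :=
  neg_le_iff_add_nonneg'.1 <| (neg_le_neg (algebraMap_mono B hs)).trans
    ha.neg_algebraMap_norm_le_self

theorem inner_algebraMap_add_apply_ne_zero {H : Type*} [NormedAddCommGroup H]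
    [InnerProductSpace ℂ H] {Ω : H} (hΩ : ‖Ω‖ = 1) {a : H →L[ℂ] H} {s : ℝ} (hs : ‖a‖ < s) :
    ⟪Ω, (algebraMap ℝ (H →L[ℂ] H) s + a) Ω⟫_ℂ ≠ 0 := by
  have hlt : ‖⟪Ω, a Ω⟫_ℂ‖ < s :=
    calc ‖⟪Ω, a Ω⟫_ℂ‖ ≤ ‖Ω‖ * ‖a Ω‖ := norm_inner_le_norm _ _
      _ ≤ ‖a‖ := by simpa [hΩ] using a.le_opNorm Ω
      _ < s := hs
  intro h
  rw [add_apply, inner_add_right, Algebra.algebraMap_eq_smul_one, smul_apply,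
    one_apply_eq_self, ← Complex.coe_smul, inner_smul_right, inner_self_eq_norm_sq_to_K, hΩ] at h
  rw [eq_neg_of_add_eq_zero_right h] at hlt
  simp only [map_one, one_pow, mul_one, norm_neg, Complex.norm_real, Real.norm_eq_abs] at hlt
  exact (le_abs_self s).not_gt hlt

section Ergodic

variable {A : Type*} [CStarAlgebra A] {G : Type*} {γ : G → (A ≃⋆ₐ[ℂ] A)} {D : G → A}
  {β : ℝ} {H : Type*} [NormedAddCommGroup H] [InnerProductSpace ℂ H] [CompleteSpace H]
  {π : A →⋆ₐ[ℂ] (H →L[ℂ] H)} {Ω : H} {W : G → (H →L[ℂ] H)}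

variable (π W) in
/-- The `γ̄`-fixed part of the centre of `π(A)''`: that centre is the commutant of
`π(A)' ∪ π(A)`, and since `W_g` is unitary, `Ad W_g` fixes `T` iff `T` commutes with `W_g`. -/
noncomputable def fixedCenter : StarSubalgebra ℂ (H →L[ℂ] H) :=
  StarSubalgebra.centralizer ℂ (opCommutant (Set.range π) ∪ Set.range π ∪ Set.range W)

theorem commute_of_mem_fixedCenter {T S : H →L[ℂ] H} (hT : T ∈ fixedCenter π W)
    (hS : S ∈ opCommutant (Set.range π) ∪ Set.range π ∪ Set.range W) : Commute T S :=
  ((StarSubalgebra.mem_centralizer_iff ℂ).1 hT S hS).1.symm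

theorem star_mem_opCommutant_range {S : H →L[ℂ] H} (hS : S ∈ opCommutant (Set.range π)) :
    star S ∈ opCommutant (Set.range π) := by
  rintro _ ⟨a, rfl⟩
  rw [← star_star (π a), ← map_star, ← star_mul, ← star_mul, hS _ ⟨star a, rfl⟩]

theorem mem_fixedCenter {z : H →L[ℂ] H} (hz : z ∈ opCommutant (opCommutant (Set.range π)))
    (hzc : ∀ y ∈ opCommutant (opCommutant (Set.range π)), z * y = y * z)
    (hW : ∀ g, star (W g) * W g = 1) (hzW : ∀ g, W g * z * star (W g) = z) :
    z ∈ fixedCenter π W := by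
  have hπ (a : A) : π a * z = z * π a := (hzc _ fun S hS => (hS _ ⟨a, rfl⟩).symm).symm
  refine (StarSubalgebra.mem_centralizer_iff ℂ).2 ?_
  rintro _ ((hS | ⟨a, rfl⟩) | ⟨g, rfl⟩)
  · exact ⟨(hz _ hS).symm, (hz _ (star_mem_opCommutant_range hS)).symm⟩
  · exact ⟨hπ a, by rw [← map_star, hπ]⟩
  · constructor
    · calc W g * z = W g * z * (star (W g) * W g) := by rw [hW, mul_one]
        _ = W g * z * star (W g) * W g := by simp only [mul_assoc]
        _ = z * W g := by rw [hzW]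
    · calc star (W g) * z = star (W g) * (W g * z * star (W g)) := by rw [hzW]
        _ = z * star (W g) := by simp only [← mul_assoc, hW, one_mul]

variable [Group G] (hDsa : ∀ g, star (D g) = D g) (hDcentral : ∀ g, ∀ x : A, D g * x = x * D g)
  (hD : ∀ g h : G, γ h⁻¹ (D g) + D h = D (g * h))
  (hW : ∀ g, star (W g) * W g = 1) (hWcov : ∀ g a, W g * π a * star (W g) = π (γ g a))
  (hWΩ : ∀ g a, W g (π a Ω) = π (γ g a * NormedSpace.exp (((β / 2 : ℝ) : ℂ) • D g⁻¹)) Ω)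
  (hcyc : (Submodule.span ℂ (Set.range fun a : A => π a Ω)).topologicalClosure = ⊤)
include hDsa hDcentral hD hW hWcov hWΩ hcyc

theorem isConformalFunctional_vectorFunctional
    (htr : ∀ a b : A, ⟪Ω, π (a * b) Ω⟫_ℂ = ⟪Ω, π (b * a) Ω⟫_ℂ) {T : H →L[ℂ] H}
    (hT : T ∈ fixedCenter π W) (hT0 : 0 ≤ T) :
    IsConformalFunctional γ D β (vectorFunctional π Ω T) := by
  have hTπ (a : A) : Commute T (π a) := commute_of_mem_fixedCenter hT (Or.inl (Or.inr ⟨a, rfl⟩))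
  refine ⟨vectorFunctional_star_mul_self_nonneg hT0 hTπ,
    vectorFunctional_mul_comm htr hcyc hTπ fun _ hS =>
      commute_of_mem_fixedCenter hT (Or.inl (Or.inl hS)),
    fun a g => vectorFunctional_map hDsa hDcentral hD (hW g) (hWcov g) (hWΩ g) hTπ
      (commute_of_mem_fixedCenter hT (Or.inr ⟨g, rfl⟩)) a⟩

variable {τ : A →L[ℂ] ℂ} (hGNS : ∀ a : A, ⟪Ω, π a Ω⟫_ℂ = τ a)
  (hτ : IsConformalTrace γ D β τ) (hext : IsExtremeConformalTrace γ D β τ)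
include hGNS hτ hext

theorem eq_inner_smul_one_of_nonneg {P : H →L[ℂ] H} (hP : P ∈ fixedCenter π W) (hP0 : 0 ≤ P)
    (hP1 : 0 ≤ 1 - P) (hne : ⟪Ω, P Ω⟫_ℂ ≠ 0) (hne' : ⟪Ω, (1 - P) Ω⟫_ℂ ≠ 0) :
    P = ⟪Ω, P Ω⟫_ℂ • 1 := by
  have htr (a b : A) : ⟪Ω, π (a * b) Ω⟫_ℂ = ⟪Ω, π (b * a) Ω⟫_ℂ := by
    rw [hGNS, hGNS, hτ.2.2.1]
  have hsum : vectorFunctional π Ω P + vectorFunctional π Ω (1 - P) = τ := by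
    ext a
    simp [hGNS]
  have hφ := hext.eq_smul_of_add_eq hτ.1
    (isConformalFunctional_vectorFunctional hDsa hDcentral hD hW hWcov hWΩ hcyc htr hP hP0)
    (isConformalFunctional_vectorFunctional hDsa hDcentral hD hW hWcov hWΩ hcyc htr
      (sub_mem (one_mem _) hP) hP1) hsum (by simpa using hne) (by simpa using hne')
  refine eq_of_vectorFunctional_eq hcyc
    (fun a => commute_of_mem_fixedCenter hP (Or.inl (Or.inr ⟨a, rfl⟩)))
    (fun a => (Commute.one_left _).smul_left _) ?_
  rw [hφ]
  ext a
  simp [hGNS]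

theorem exists_eq_smul_one_of_norm_lt_half {ξ : H →L[ℂ] H} (hξmem : ξ ∈ fixedCenter π W)
    (hξsa : IsSelfAdjoint ξ) (hξ : ‖ξ‖ < 1 / 2) : ∃ c : ℂ, ξ = c • 1 := by
  have hΩ : ‖Ω‖ = 1 := by
    have h : ⟪Ω, Ω⟫_ℂ = 1 := by simpa [hτ.1] using hGNS 1
    rw [norm_eq_sqrt_re_inner (𝕜 := ℂ), h, RCLike.one_re, Real.sqrt_one]
  have hPmem : algebraMap ℝ (H →L[ℂ] H) (1 / 2) + ξ ∈ fixedCenter π W := by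
    rw [IsScalarTower.algebraMap_apply ℝ ℂ]
    exact add_mem (algebraMap_mem _ _) hξmem
  have hP1 : 1 - (algebraMap ℝ (H →L[ℂ] H) (1 / 2) + ξ) =
      algebraMap ℝ (H →L[ℂ] H) (1 / 2) + -ξ := by
    rw [Algebra.algebraMap_eq_smul_one]
    module
  have hξ' : ‖-ξ‖ < 1 / 2 := by rwa [norm_neg]
  have hP := eq_inner_smul_one_of_nonneg hDsa hDcentral hD hW hWcov hWΩ hcyc hGNS hτ hext hPmem
    (hξsa.algebraMap_add_nonneg hξ.le) (by rw [hP1]; exact hξsa.neg.algebraMap_add_nonneg hξ'.le)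
    (inner_algebraMap_add_apply_ne_zero hΩ hξ)
    (by rw [hP1]; exact inner_algebraMap_add_apply_ne_zero hΩ hξ')
  generalize ⟪Ω, (algebraMap ℝ (H →L[ℂ] H) (1 / 2) + ξ) Ω⟫_ℂ = c at hP
  refine ⟨c - 1 / 2, ?_⟩
  rw [eq_sub_of_add_eq' hP, Algebra.algebraMap_eq_smul_one, ← Complex.coe_smul, sub_smul]
  push_cast
  rfl

theorem exists_eq_smul_one_of_isSelfAdjoint {ζ : H →L[ℂ] H} (hζ : ζ ∈ fixedCenter π W)
    (hsa : IsSelfAdjoint ζ) : ∃ c : ℂ, ζ = c • 1 := by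
  set r : ℝ := 2 * ‖ζ‖ + 1
  have hr : 0 < r := by positivity
  have hmem : r⁻¹ • ζ ∈ fixedCenter π W := by
    rw [← Complex.coe_smul]
    exact SMulMemClass.smul_mem _ hζ
  have hnorm : ‖r⁻¹ • ζ‖ < 1 / 2 := by
    rw [norm_smul, Real.norm_of_nonneg (inv_nonneg.2 hr.le), inv_mul_lt_iff₀ hr]
    linarith
  obtain ⟨c, hc⟩ := exists_eq_smul_one_of_norm_lt_half hDsa hDcentral hD hW hWcov hWΩ hcyc hGNS hτ
    hext hmem ((IsSelfAdjoint.all r⁻¹).smul hsa) hnorm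
  refine ⟨r * c, ?_⟩
  rw [← smul_inv_smul₀ hr.ne' ζ, hc, ← Complex.coe_smul, smul_smul]

theorem exists_eq_smul_one_of_mem_fixedCenter {T : H →L[ℂ] H} (hT : T ∈ fixedCenter π W) :
    ∃ c : ℂ, T = c • 1 := by
  obtain ⟨c₁, h₁⟩ := exists_eq_smul_one_of_isSelfAdjoint hDsa hDcentral hD hW hWcov hWΩ hcyc
    hGNS hτ hext (ζ := (realPart T : H →L[ℂ] H)) (by
      rw [realPart_apply_coe, ← Complex.coe_smul]
      exact SMulMemClass.smul_mem _ (add_mem hT (star_mem hT))) (realPart T).2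
  obtain ⟨c₂, h₂⟩ := exists_eq_smul_one_of_isSelfAdjoint hDsa hDcentral hD hW hWcov hWΩ hcyc
    hGNS hτ hext (ζ := (imaginaryPart T : H →L[ℂ] H)) (by
      rw [imaginaryPart_apply_coe, ← Complex.coe_smul]
      exact SMulMemClass.smul_mem _ (SMulMemClass.smul_mem _ (sub_mem hT (star_mem hT))))
    (imaginaryPart T).2
  refine ⟨c₁ + Complex.I * c₂, ?_⟩
  rw [← realPart_add_I_smul_imaginaryPart T, h₁, h₂]
  module

end Ergodic

theorem stmt12_general {A : Type*} [NormedRing A] [StarRing A] [CStarRing A]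
    [NormedAlgebra ℂ A] [CompleteSpace A] [StarModule ℂ A]
    {G : Type*} [Group G]
    (γ : G → (A ≃⋆ₐ[ℂ] A))
    (D : G → A)
    (hDsa : ∀ g, star (D g) = D g)
    (hDcentral : ∀ g, ∀ x : A, D g * x = x * D g)
    (hDcocycle : ∀ g h : G, γ h⁻¹ (D g) + D h = D (g * h))
    (β : ℝ)
    -- τ is an extremal conformal trace
    (τ : A →L[ℂ] ℂ)
    (hτ : IsConformalTrace γ D β τ)
    (hext : ∀ τ₁ τ₂ : A →L[ℂ] ℂ, IsConformalTrace γ D β τ₁ →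
      IsConformalTrace γ D β τ₂ → ∀ t : ℝ, 0 < t → t < 1 →
      τ = ((t : ℂ) • τ₁ + (((1 - t : ℝ) : ℂ)) • τ₂) → τ₁ = τ ∧ τ₂ = τ)
    -- GNS representation of τ
    {H : Type*} [NormedAddCommGroup H] [InnerProductSpace ℂ H] [CompleteSpace H]
    (π : A →⋆ₐ[ℂ] (H →L[ℂ] H)) (Ω : H)
    (hGNS : ∀ a : A, (inner ℂ Ω (π a Ω) : ℂ) = τ a)
    (hcyc : (Submodule.span ℂ (Set.range fun a : A => π a Ω)).topologicalClosure = ⊤)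
    -- the unitary representation W implementing γ̄
    (W : G → (H →L[ℂ] H))
    (hWunit : ∀ g : G, star (W g) * W g = 1 ∧ W g * star (W g) = 1)
    (hWcov : ∀ (g : G) (a : A), W g * π a * star (W g) = π (γ g a))
    (hWΩ : ∀ (g : G) (a : A),
      W g (π a Ω) = π (γ g a * NormedSpace.exp (((β / 2 : ℝ) : ℂ) • D g⁻¹)) Ω) :
    -- ergodicity of γ̄ on the center of π_τ(A)''
    ∀ z ∈ opCommutant (opCommutant (Set.range π)),
      (∀ y ∈ opCommutant (opCommutant (Set.range π)), z * y = y * z) →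
      (∀ g : G, W g * z * star (W g) = z) →
      ∃ lam : ℂ, z = lam • (1 : H →L[ℂ] H) := by
  let : CStarAlgebra A := { ‹NormedRing A›, ‹StarRing A›, ‹CStarRing A›, ‹NormedAlgebra ℂ A›,
    ‹StarModule ℂ A›, ‹CompleteSpace A› with }
  have hW (g : G) : star (W g) * W g = 1 := (hWunit g).1
  intro z hz hzc hzW
  exact exists_eq_smul_one_of_mem_fixedCenter hDsa hDcentral hDcocycle hW hWcov hWΩ hcyc hGNS hτ
    hext (mem_fixedCenter hz hzc hW hzW)

/-- Let `τ ∈ ∂_e T_β(A)` be an extremal `(α^D, β)`-conformal trace on `A`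
(crossed product setting, countable discrete `G`).  Then the induced action
`γ̄_g = Ad W_g` of `G` on the center of `π_τ(A)''` is ergodic: any central element of
`π_τ(A)''` fixed by all `γ̄_g` is a scalar. -/
theorem stmt12 {A : Type*} [NormedRing A] [StarRing A] [CStarRing A]
    [NormedAlgebra ℂ A] [CompleteSpace A] [StarModule ℂ A]
    [TopologicalSpace.SeparableSpace A]
    {G : Type*} [Group G] [Countable G]
    (γ : G → (A ≃⋆ₐ[ℂ] A))
    (hγ1 : ∀ x : A, γ 1 x = x)
    (hγmul : ∀ (g h : G) (x : A), γ (g * h) x = γ g (γ h x))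
    (D : G → A)
    (hDsa : ∀ g, star (D g) = D g)
    (hDcentral : ∀ g, ∀ x : A, D g * x = x * D g)
    (hDcocycle : ∀ g h : G, γ h⁻¹ (D g) + D h = D (g * h))
    (β : ℝ)
    -- τ is an extremal conformal trace
    (τ : A →L[ℂ] ℂ)
    (hτ : IsConformalTrace γ D β τ)
    (hext : ∀ τ₁ τ₂ : A →L[ℂ] ℂ, IsConformalTrace γ D β τ₁ →
      IsConformalTrace γ D β τ₂ → ∀ t : ℝ, 0 < t → t < 1 →
      τ = ((t : ℂ) • τ₁ + (((1 - t : ℝ) : ℂ)) • τ₂) → τ₁ = τ ∧ τ₂ = τ)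
    -- GNS representation of τ
    {H : Type*} [NormedAddCommGroup H] [InnerProductSpace ℂ H] [CompleteSpace H]
    (π : A →⋆ₐ[ℂ] (H →L[ℂ] H)) (Ω : H)
    (hGNS : ∀ a : A, (inner ℂ Ω (π a Ω) : ℂ) = τ a)
    (hcyc : (Submodule.span ℂ (Set.range fun a : A => π a Ω)).topologicalClosure = ⊤)
    -- the unitary representation W implementing γ̄
    (W : G → (H →L[ℂ] H))
    (hWunit : ∀ g : G, star (W g) * W g = 1 ∧ W g * star (W g) = 1)
    (hWcov : ∀ (g : G) (a : A), W g * π a * star (W g) = π (γ g a))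
    (hWΩ : ∀ (g : G) (a : A),
      W g (π a Ω) = π (γ g a * NormedSpace.exp (((β / 2 : ℝ) : ℂ) • D g⁻¹)) Ω) :
    -- ergodicity of γ̄ on the center of π_τ(A)''
    ∀ z ∈ opCommutant (opCommutant (Set.range π)),
      (∀ y ∈ opCommutant (opCommutant (Set.range π)), z * y = y * z) →
      (∀ g : G, W g * z * star (W g) = z) →
      ∃ lam : ℂ, z = lam • (1 : H →L[ℂ] H) :=
  stmt12_general γ D hDsa hDcentral hDcocycle β τ hτ hext π Ω hGNS hcyc W hWunit hWcov hWΩ
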